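/- Let G be an unmixed bipartite graph on {x_1,...,x_n} ∪ {y_1,...,y_n} with {x_i,y_i} ∈ E(G) for all i. Then L_G = {C̄ : C a minimal vertex cover of G}, where C̄ = {i : x_i ∈ C}, is a sublattice of the Boolean lattice on [n] (closed under union and intersection) containing ∅ and [n]. -/

import Mathlib

open Finset

/-- `C` is a vertex cover of the graph `G`. -/
def IsVC {α : Type*} (G : SimpleGraph α) (C : Finset α) : Prop :=
  ∀ ⦃u v : α⦄, G.Adj u v → u ∈ C ∨ v ∈ C

/-- `C` is a minimal vertex cover of the graph `G`. -/
def IsMinVC {α : Type*} (G : SimpleGraph α) (C : Finset α) : Prop :=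
  IsVC G C ∧ ∀ C' ⊂ C, ¬ IsVC G C'

/-- `G` is unmixed: all minimal vertex covers have the same cardinality. -/
def Unmixed {α : Type*} (G : SimpleGraph α) : Prop :=
  ∀ C C' : Finset α, IsMinVC G C → IsMinVC G C' → C.card = C'.card

/-- `G` is bipartite with respect to the given sum decomposition of its vertex set:
all edges go between the two parts. -/
def Bip {m n : ℕ} (G : SimpleGraph (Fin m ⊕ Fin n)) : Prop :=
  (∀ i j, ¬ G.Adj (Sum.inl i) (Sum.inl j)) ∧ ∀ i j, ¬ G.Adj (Sum.inr i) (Sum.inr j)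

/-- the set `{x_i : i ∈ S} ∪ {y_j : j ∉ S}`, where `x_i = Sum.inl i`, `y_j = Sum.inr j`. -/
def coverOf {n : ℕ} (S : Finset (Fin n)) : Finset (Fin n ⊕ Fin n) :=
  S.image Sum.inl ∪ Sᶜ.image Sum.inr

/-- the "x-part" `C̄ = {i : x_i ∈ C}` of a set of vertices `C`. -/
def xpart {n : ℕ} (C : Finset (Fin n ⊕ Fin n)) : Finset (Fin n) :=
  Finset.univ.filter fun i => Sum.inl i ∈ C

/-- the lattice `L_G` of x-parts of minimal vertex covers of `G` -/
def latticeOf {n : ℕ} (G : SimpleGraph (Fin n ⊕ Fin n)) : Set (Finset (Fin n)) :=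
  {S | ∃ C : Finset (Fin n ⊕ Fin n), IsMinVC G C ∧ S = xpart C}

/-!
Because of the perfect matching, a vertex cover `C` contains `coverOf (xpart C)`, and every
`coverOf S` has `n` elements; unmixedness (compared with the cover `{y_1, …, y_n}`) forces every
minimal cover to have `n` elements too, so it equals `coverOf` of its x-part. Hence `S ∈ L_G`
exactly when `coverOf S` is a cover, i.e. (by bipartiteness) when every edge `x_i y_j` with
`j ∈ S` has `i ∈ S`; this condition holds for `∅` and `[n]` and survives unions and intersections.
-/

section CoverOf

variable {n : ℕ} {S : Finset (Fin n)}

@[simp]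
lemma inl_mem_coverOf {i : Fin n} : Sum.inl i ∈ coverOf S ↔ i ∈ S := by
  simp [coverOf]

@[simp]
lemma inr_mem_coverOf {j : Fin n} : Sum.inr j ∈ coverOf S ↔ j ∉ S := by
  simp [coverOf]

lemma xpart_coverOf (S : Finset (Fin n)) : xpart (coverOf S) = S := by
  ext i
  simp [xpart]

lemma card_coverOf (S : Finset (Fin n)) : (coverOf S).card = n := by
  rw [coverOf, card_union_of_disjoint (by simp [Finset.disjoint_left]),
    card_image_of_injective _ Sum.inl_injective, card_image_of_injective _ Sum.inr_injective,
    card_add_card_compl, Fintype.card_fin]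

end CoverOf

section MatchedBipartite

variable {n : ℕ} {G : SimpleGraph (Fin n ⊕ Fin n)} {S : Finset (Fin n)}
  {C : Finset (Fin n ⊕ Fin n)}

lemma isVC_coverOf_iff (hbip : Bip G) :
    IsVC G (coverOf S) ↔ ∀ i j, G.Adj (Sum.inl i) (Sum.inr j) → j ∈ S → i ∈ S := by
  refine ⟨fun h i j hij hj => by simpa [hj] using h hij, fun h => ?_⟩
  rintro (i | i) (j | j) hadj
  · exact absurd hadj (hbip.1 i j)
  · simpa [or_iff_not_imp_right] using h i j hadj
  · simpa [or_iff_not_imp_left] using h j i hadj.symm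
  · exact absurd hadj (hbip.2 i j)

lemma IsVC.coverOf_xpart_subset (hmatch : ∀ i, G.Adj (Sum.inl i) (Sum.inr i))
    (hC : IsVC G C) : coverOf (xpart C) ⊆ C := by
  rintro (i | j) hv
  · simpa [xpart] using hv
  · have hj : Sum.inl j ∉ C := by simpa [xpart] using hv
    exact (hC (hmatch j)).resolve_left hj

lemma isMinVC_coverOf (hmatch : ∀ i, G.Adj (Sum.inl i) (Sum.inr i))
    (h : IsVC G (coverOf S)) : IsMinVC G (coverOf S) := by
  refine ⟨h, fun C hC hvc => ?_⟩
  obtain ⟨v, hvS, hvC⟩ := Finset.exists_of_ssubset hC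
  have hsub := hC.subset
  rcases v with i | j
  · rcases hvc (hmatch i) with h' | h'
    · exact hvC h'
    · exact (inr_mem_coverOf.mp (hsub h')) (inl_mem_coverOf.mp hvS)
  · rcases hvc (hmatch j) with h' | h'
    · exact inr_mem_coverOf.mp hvS (inl_mem_coverOf.mp (hsub h'))
    · exact hvC h'

lemma IsMinVC.card_eq (hbip : Bip G) (hmatch : ∀ i, G.Adj (Sum.inl i) (Sum.inr i))
    (hunm : Unmixed G) (hC : IsMinVC G C) : C.card = n := by
  have hempty : IsMinVC G (coverOf ∅) :=
    isMinVC_coverOf hmatch ((isVC_coverOf_iff hbip).2 fun _ _ _ hj => absurd hj (notMem_empty _))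
  rw [hunm C _ hC hempty, card_coverOf]

lemma IsMinVC.eq_coverOf_xpart (hbip : Bip G) (hmatch : ∀ i, G.Adj (Sum.inl i) (Sum.inr i))
    (hunm : Unmixed G) (hC : IsMinVC G C) : C = coverOf (xpart C) :=
  (eq_of_subset_of_card_le (hC.1.coverOf_xpart_subset hmatch)
    (by rw [card_coverOf, hC.card_eq hbip hmatch hunm])).symm

lemma mem_latticeOf_iff (hbip : Bip G) (hmatch : ∀ i, G.Adj (Sum.inl i) (Sum.inr i))
    (hunm : Unmixed G) : S ∈ latticeOf G ↔ IsVC G (coverOf S) := by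
  constructor
  · rintro ⟨C, hC, rfl⟩
    rw [← hC.eq_coverOf_xpart hbip hmatch hunm]
    exact hC.1
  · exact fun h => ⟨coverOf S, isMinVC_coverOf hmatch h, (xpart_coverOf S).symm⟩

end MatchedBipartite

/-- `L_G` is a sublattice of the Boolean lattice on `[n]` containing
`∅` and `[n]`. -/
theorem stmt_5 {n : ℕ} (G : SimpleGraph (Fin n ⊕ Fin n)) (hbip : Bip G)
    (hmatch : ∀ i, G.Adj (Sum.inl i) (Sum.inr i)) (hunm : Unmixed G) :
    (∅ : Finset (Fin n)) ∈ latticeOf G ∧ (Finset.univ : Finset (Fin n)) ∈ latticeOf G ∧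
      ∀ S ∈ latticeOf G, ∀ T ∈ latticeOf G,
        S ∪ T ∈ latticeOf G ∧ S ∩ T ∈ latticeOf G := by
  simp only [mem_latticeOf_iff hbip hmatch hunm, isVC_coverOf_iff hbip]
  refine ⟨by simp, by simp, fun S hS T hT => ⟨fun i j hij => ?_, fun i j hij => ?_⟩⟩
  · simpa only [mem_union] using Or.imp (hS i j hij) (hT i j hij)
  · simpa only [mem_inter] using And.imp (hS i j hij) (hT i j hij)
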